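/- arXiv:1909.13638 — 2 statements merged into one kernel-verified Lean document; each statement's English description precedes it below -/
import Mathlib

section
/- For Re(α)>0 and Re(β)>0, the left-sided Riemann-Liouville fractional integrals satisfy the semigroup property: I^α(I^β f)(t) = I^{α+β} f(t) for all t in [0,b], whenever f is continuous on [0,b]. -/
open intervalIntegral

/-- Left-sided Riemann-Liouville fractional integral of order `α`. -/
noncomputable def rlInt (α : ℝ) (f : ℝ → ℝ) (t : ℝ) : ℝ :=
  (1 / Real.Gamma α) * ∫ u in (0:ℝ)..t, f u * (t - u) ^ (α - 1)

open MeasureTheory Real Set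


noncomputable def rBeta (s t : ℝ) : ℝ := ∫ x in (0:ℝ)..1, x ^ (s - 1) * (1 - x) ^ (t - 1)

lemma rBeta_eq_complex {s t : ℝ} (hs : 0 < s) (ht : 0 < t) :
    Complex.betaIntegral s t = (rBeta s t : ℂ) := by
  rw [Complex.betaIntegral, rBeta, ← intervalIntegral.integral_ofReal]
  refine intervalIntegral.integral_congr fun x hx => ?_
  rw [Set.uIcc_of_le (by norm_num : (0:ℝ) ≤ 1)] at hx
  push_cast
  rw [Complex.ofReal_cpow hx.1, Complex.ofReal_cpow (by linarith [hx.2])]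
  push_cast
  ring

lemma Gamma_mul_Gamma_eq_rBeta {s t : ℝ} (hs : 0 < s) (ht : 0 < t) :
    Real.Gamma s * Real.Gamma t = Real.Gamma (s + t) * rBeta s t := by
  have := Complex.Gamma_mul_Gamma_eq_betaIntegral (s := s) (t := t)
    (by simpa using hs) (by simpa using ht)
  rw [rBeta_eq_complex hs ht] at this
  have h2 : ((Real.Gamma s * Real.Gamma t : ℝ) : ℂ) =
      ((Real.Gamma (s + t) * rBeta s t : ℝ) : ℂ) := by
    push_cast
    rw [← Complex.Gamma_ofReal, ← Complex.Gamma_ofReal, ← Complex.Gamma_ofReal] at *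
    push_cast at this ⊢
    exact this
  exact_mod_cast h2

lemma rBeta_scaled {s t : ℝ} (hs : 0 < s) (ht : 0 < t) {a : ℝ} (ha : 0 < a) :
    ∫ x in (0:ℝ)..a, x ^ (s - 1) * (a - x) ^ (t - 1) = a ^ (s + t - 1) * rBeta s t := by
  have hC := Complex.betaIntegral_scaled (s : ℂ) (t : ℂ) ha
  rw [rBeta_eq_complex hs ht] at hC
  have h1 : (∫ x in (0:ℝ)..a, ((x : ℂ)) ^ ((s:ℂ) - 1) * ((a : ℂ) - x) ^ ((t:ℂ) - 1))
      = ((∫ x in (0:ℝ)..a, x ^ (s - 1) * (a - x) ^ (t - 1) : ℝ) : ℂ) := by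
    rw [← intervalIntegral.integral_ofReal]
    refine intervalIntegral.integral_congr fun x hx => ?_
    rw [Set.uIcc_of_le ha.le] at hx
    push_cast
    rw [Complex.ofReal_cpow hx.1, Complex.ofReal_cpow (by linarith [hx.2])]
    push_cast
    ring
  rw [h1] at hC
  have h2 : ((a:ℂ)) ^ ((s:ℂ) + t - 1) = ((a ^ (s + t - 1) : ℝ) : ℂ) := by
    rw [Complex.ofReal_cpow ha.le]
    push_cast
    ring_nf
  rw [h2, ← Complex.ofReal_mul] at hC
  exact_mod_cast hC

lemma kernel_integrable {s t : ℝ} (hs : 0 < s) (ht : 0 < t) {a : ℝ} (ha : 0 < a) :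
    IntervalIntegrable (fun x => x ^ (s - 1) * (a - x) ^ (t - 1)) volume 0 a := by
  have h1 : IntervalIntegrable (fun x => x ^ (s - 1) * (a - x) ^ (t - 1)) volume 0 (a / 2) := by
    apply IntervalIntegrable.mul_continuousOn
    · exact intervalIntegral.intervalIntegrable_rpow' (by linarith)
    · apply ContinuousOn.rpow_const (by fun_prop)
      intro x hx
      rw [Set.uIcc_of_le (by linarith : (0:ℝ) ≤ a / 2)] at hx
      exact Or.inl (by intro h; nlinarith [hx.2])
  have h2 : IntervalIntegrable (fun x => x ^ (s - 1) * (a - x) ^ (t - 1)) volume (a / 2) a := by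
    apply IntervalIntegrable.continuousOn_mul
    · have h := (intervalIntegral.intervalIntegrable_rpow' (r := t - 1)
        (by linarith) (a := 0) (b := a / 2)).comp_sub_left a
      rw [sub_zero, show a - a / 2 = a / 2 by ring] at h
      exact h.symm
    · apply ContinuousOn.rpow_const (by fun_prop)
      intro x hx
      rw [Set.uIcc_of_le (by linarith : a / 2 ≤ a)] at hx
      exact Or.inl (by intro h; nlinarith [hx.1])
  exact h1.trans h2

lemma inner_integral {s t : ℝ} (hs : 0 < s) (ht : 0 < t) {u c : ℝ} (huc : u < c) :
    ∫ x in u..c, (x - u) ^ (s - 1) * (c - x) ^ (t - 1)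
      = (c - u) ^ (s + t - 1) * rBeta s t := by
  have key : ∫ x in u..c, (x - u) ^ (s - 1) * (c - x) ^ (t - 1)
      = ∫ x in (0:ℝ)..(c - u), x ^ (s - 1) * ((c - u) - x) ^ (t - 1) := by
    have := intervalIntegral.integral_comp_sub_right
      (fun x => x ^ (s - 1) * ((c - u) - x) ^ (t - 1)) u (a := u) (b := c)
    simp only [sub_self] at this
    rw [← this]
    refine intervalIntegral.integral_congr fun x hx => ?_
    have : c - u - (x - u) = c - x := by ring
    rw [this]
  rw [key, rBeta_scaled hs ht (by linarith)]

lemma kernel_integrable' {s t : ℝ} (hs : 0 < s) (ht : 0 < t) {u c : ℝ} (huc : u < c) :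
    IntervalIntegrable (fun x => (x - u) ^ (s - 1) * (c - x) ^ (t - 1)) volume u c := by
  have := (kernel_integrable hs ht (show (0:ℝ) < c - u by linarith)).comp_sub_right u
  simp only [zero_add, sub_add_cancel] at this
  simp only [show ∀ x : ℝ, c - u - (x - u) = c - x from fun x => by ring] at this
  exact this

lemma helperA {β : ℝ} (hβ : 0 < β) {s : ℝ} (hs : 0 < s) (κ : ℝ) (g : ℝ → ℝ)
    (hg : Continuous g) :
    IntervalIntegrable (fun u => g u * ((s - u) ^ (β - 1) * κ)) volume 0 s := by
  apply IntervalIntegrable.continuousOn_mul _ hg.continuousOn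
  have h := (intervalIntegral.intervalIntegrable_rpow' (r := β - 1)
    (by linarith) (a := 0) (b := s)).comp_sub_left s
  rw [sub_zero, sub_self] at h
  exact (h.symm).mul_const κ

lemma helperB {β : ℝ} (hβ : 0 < β) {s : ℝ} (hs : 0 < s) :
    ∫ u in (0:ℝ)..s, (s - u) ^ (β - 1) = s ^ β / β := by
  have h := intervalIntegral.integral_comp_sub_left (a := 0) (b := s)
    (fun x => x ^ (β - 1)) s
  rw [sub_zero, sub_self] at h
  rw [h, intervalIntegral.integral_symm, ← intervalIntegral.integral_symm,
    integral_rpow (Or.inl (by linarith))]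
  rw [Real.zero_rpow (by linarith : β - 1 + 1 ≠ 0)]
  rw [show β - 1 + 1 = β by ring]
  ring




lemma rl_semigroup_cont (α β : ℝ) (hα : 0 < α) (hβ : 0 < β) (g : ℝ → ℝ)
    (hg : Continuous g) (M : ℝ) (hM : ∀ x, |g x| ≤ M) {t : ℝ} (ht0 : 0 ≤ t) :
    rlInt α (rlInt β g) t = rlInt (α + β) g t := by
  rcases eq_or_lt_of_le ht0 with rfl | ht
  · simp [rlInt]
  clear ht0
  have hM0 : 0 ≤ M := (abs_nonneg _).trans (hM 0)
  have hΓα := Real.Gamma_pos_of_pos hα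
  have hΓβ := Real.Gamma_pos_of_pos hβ
  have hΓs := Real.Gamma_pos_of_pos (by linarith : 0 < α + β)
  set S : Set (ℝ × ℝ) := {p | 0 < p.2 ∧ p.2 < p.1 ∧ p.1 < t} with hSdef
  have hSm : MeasurableSet S := by
    exact (measurableSet_lt measurable_const measurable_snd).inter
      ((measurableSet_lt measurable_snd measurable_fst).inter
        (measurableSet_lt measurable_fst measurable_const))
  set F : ℝ × ℝ → ℝ := fun p => g p.2 * ((p.1 - p.2) ^ (β - 1) * (t - p.1) ^ (α - 1))
    with hFdef
  have hFm : Measurable F := by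
    apply Measurable.mul (hg.measurable.comp measurable_snd)
    apply Measurable.mul <;> fun_prop
  set H : ℝ → ℝ → ℝ := fun s u => S.indicator F (s, u) with hHdef
  have hHm : AEStronglyMeasurable (Function.uncurry H) (volume.prod volume) :=
    (hFm.indicator hSm).aestronglyMeasurable
  -- section descriptions
  have hsec1 : ∀ s ∈ Ioo (0:ℝ) t, ∀ u, H s u = (Ioo 0 s).indicator (fun u => F (s, u)) u := by
    intro s hs u
    simp only [hHdef, hSdef, Set.indicator_apply, Set.mem_setOf_eq, Set.mem_Ioo]
    by_cases h1 : 0 < u ∧ u < s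
    · rw [if_pos ⟨h1.1, h1.2, hs.2⟩, if_pos h1]
    · rw [if_neg (fun hc => h1 ⟨hc.1, hc.2.1⟩), if_neg h1]
  have hsec0 : ∀ s ∉ Ioo (0:ℝ) t, ∀ u, H s u = 0 := by
    intro s hs u
    apply Set.indicator_of_notMem
    intro hc
    exact hs ⟨lt_trans hc.1 hc.2.1, hc.2.2⟩
  have hsec1' : ∀ u ∈ Ioo (0:ℝ) t, ∀ s, H s u = (Ioo u t).indicator (fun s => F (s, u)) s := by
    intro u hu s
    simp only [hHdef, hSdef, Set.indicator_apply, Set.mem_setOf_eq, Set.mem_Ioo]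
    by_cases h1 : u < s ∧ s < t
    · rw [if_pos ⟨hu.1, h1.1, h1.2⟩, if_pos h1]
    · rw [if_neg (fun hc => h1 ⟨hc.2.1, hc.2.2⟩), if_neg h1]
  have hsec0' : ∀ u ∉ Ioo (0:ℝ) t, ∀ s, H s u = 0 := by
    intro u hu s
    apply Set.indicator_of_notMem
    intro hc
    exact hu ⟨hc.1, lt_trans hc.2.1 hc.2.2⟩
  -- integrability of u-sections
  have hint_sec : ∀ s, Integrable (H s) volume := by
    intro s
    by_cases hs : s ∈ Ioo (0:ℝ) t
    · rw [funext (hsec1 s hs)]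
      rw [integrable_indicator_iff measurableSet_Ioo]
      exact ((helperA hβ hs.1 ((t - s) ^ (α - 1)) g hg).1).mono_set Ioo_subset_Ioc_self
    · rw [funext (hsec0 s hs)]
      exact integrable_zero _ _ _
  -- bound for the norms integral
  have hnormint : ∀ s ∈ Ioo (0:ℝ) t,
      (∫ u, ‖H s u‖) ≤ M * (t ^ β / β) * (t - s) ^ (α - 1) := by
    intro s hs
    have e1 : (fun u => ‖H s u‖) =
        (Ioo 0 s).indicator (fun u => ‖F (s, u)‖) := by
      funext u
      rw [hsec1 s hs u]
      exact norm_indicator_eq_indicator_norm _ _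
    rw [e1, MeasureTheory.integral_indicator measurableSet_Ioo]
    have hkint : IntegrableOn (fun u => M * ((s - u) ^ (β - 1) * (t - s) ^ (α - 1)))
        (Ioo 0 s) volume := by
      exact ((helperA hβ hs.1 ((t - s) ^ (α - 1)) (fun _ => M)
        continuous_const).1).mono_set Ioo_subset_Ioc_self
    have step1 : (∫ u in Ioo (0:ℝ) s, ‖F (s, u)‖) ≤
        ∫ u in Ioo (0:ℝ) s, M * ((s - u) ^ (β - 1) * (t - s) ^ (α - 1)) := by
      apply MeasureTheory.setIntegral_mono_on
      · exact (((helperA hβ hs.1 ((t - s) ^ (α - 1)) g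
          hg).1).mono_set Ioo_subset_Ioc_self).norm
      · exact hkint
      · exact measurableSet_Ioo
      · intro u hu
        have hk : 0 ≤ (s - u) ^ (β - 1) * (t - s) ^ (α - 1) :=
          mul_nonneg (Real.rpow_nonneg (by linarith [hu.2]) _)
            (Real.rpow_nonneg (by linarith [hs.2]) _)
        simp only [hFdef, Real.norm_eq_abs, abs_mul]
        rw [abs_of_nonneg (Real.rpow_nonneg (by linarith [hu.2] : (0:ℝ) ≤ s - u) _),
          abs_of_nonneg (Real.rpow_nonneg (by linarith [hs.2] : (0:ℝ) ≤ t - s) _)]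
        exact mul_le_mul_of_nonneg_right (hM u) hk
    refine step1.trans ?_
    have step2 : ∫ u in Ioo (0:ℝ) s, M * ((s - u) ^ (β - 1) * (t - s) ^ (α - 1))
        = M * (t - s) ^ (α - 1) * (s ^ β / β) := by
      rw [← MeasureTheory.integral_Ioc_eq_integral_Ioo,
        ← intervalIntegral.integral_of_le hs.1.le]
      rw [show (fun u => M * ((s - u) ^ (β - 1) * (t - s) ^ (α - 1)))
          = (fun u => (M * (t - s) ^ (α - 1)) * (s - u) ^ (β - 1)) by funext u; ring]
      rw [intervalIntegral.integral_const_mul, helperB hβ hs.1]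
    rw [step2]
    have hsβ : s ^ β ≤ t ^ β := Real.rpow_le_rpow hs.1.le hs.2.le hβ.le
    have htS : (0:ℝ) ≤ (t - s) ^ (α - 1) := Real.rpow_nonneg (by linarith [hs.2]) _
    have hβ' : (0:ℝ) < β := hβ
    calc M * (t - s) ^ (α - 1) * (s ^ β / β) ≤ M * (t - s) ^ (α - 1) * (t ^ β / β) := by
          apply mul_le_mul_of_nonneg_left _ (mul_nonneg hM0 htS)
          gcongr
      _ = M * (t ^ β / β) * (t - s) ^ (α - 1) := by ring
  -- integrability on the product
  have hB_int : Integrable ((Ioo (0:ℝ) t).indicator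
      (fun s => M * (t ^ β / β) * (t - s) ^ (α - 1))) volume := by
    rw [integrable_indicator_iff measurableSet_Ioo]
    have h := (intervalIntegral.intervalIntegrable_rpow' (r := α - 1)
      (by linarith) (a := 0) (b := t)).comp_sub_left t
    rw [sub_zero, sub_self] at h
    exact (((h.symm).const_mul (M * (t ^ β / β))).1).mono_set Ioo_subset_Ioc_self
  have hHint : Integrable (Function.uncurry H) (volume.prod volume) := by
    rw [MeasureTheory.integrable_prod_iff hHm]
    constructor
    · exact Filter.Eventually.of_forall hint_sec
    · apply MeasureTheory.Integrable.mono' hB_int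
      · exact hHm.norm.integral_prod_right'
      · apply Filter.Eventually.of_forall
        intro s
        simp only [Function.uncurry_apply_pair]
        rw [Real.norm_of_nonneg (integral_nonneg fun u => norm_nonneg _)]
        by_cases hs : s ∈ Ioo (0:ℝ) t
        · rw [Set.indicator_of_mem hs]
          exact hnormint s hs
        · rw [Set.indicator_of_notMem hs]
          rw [funext (hsec0 s hs)]
          simp
  have hswap := MeasureTheory.integral_integral_swap hHint
  have hL : rlInt α (rlInt β g) t = (1 / Real.Gamma α) * ((1 / Real.Gamma β) *
      ∫ s in (0:ℝ)..t, (∫ u in (0:ℝ)..s, g u * (s - u) ^ (β - 1)) * (t - s) ^ (α - 1)) := by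
    rw [rlInt]
    congr 1
    rw [← intervalIntegral.integral_const_mul]
    refine intervalIntegral.integral_congr fun s hs => ?_
    rw [rlInt]; ring
  have hI2 : (∫ s in (0:ℝ)..t, (∫ u in (0:ℝ)..s, g u * (s - u) ^ (β - 1)) * (t - s) ^ (α - 1))
      = ∫ s, ∫ u, H s u := by
    rw [intervalIntegral.integral_of_le ht.le, MeasureTheory.integral_Ioc_eq_integral_Ioo]
    calc ∫ s in Ioo (0:ℝ) t, (∫ u in (0:ℝ)..s, g u * (s - u) ^ (β - 1)) * (t - s) ^ (α - 1)
        = ∫ s in Ioo (0:ℝ) t, ∫ u, H s u := by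
          refine MeasureTheory.setIntegral_congr_fun measurableSet_Ioo fun s hs => ?_
          rw [funext (hsec1 s hs), MeasureTheory.integral_indicator measurableSet_Ioo,
            ← MeasureTheory.integral_Ioc_eq_integral_Ioo,
            ← intervalIntegral.integral_of_le hs.1.le, ← intervalIntegral.integral_mul_const]
          refine intervalIntegral.integral_congr fun u hu => ?_
          simp only [hFdef]; ring
      _ = ∫ s, ∫ u, H s u := by
          apply MeasureTheory.setIntegral_eq_integral_of_forall_compl_eq_zero
          intro s hs
          rw [funext (hsec0 s hs)]
          simp
  have hI3 : (∫ u, ∫ s, H s u) = rBeta β α * ∫ u in (0:ℝ)..t, g u * (t - u) ^ (α + β - 1) := by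
    rw [intervalIntegral.integral_of_le ht.le, MeasureTheory.integral_Ioc_eq_integral_Ioo]
    calc (∫ u, ∫ s, H s u)
        = ∫ u in Ioo (0:ℝ) t, ∫ s, H s u := by
          symm
          apply MeasureTheory.setIntegral_eq_integral_of_forall_compl_eq_zero
          intro u hu
          have e : (fun s => H s u) = fun _ => (0:ℝ) := funext fun s => hsec0' u hu s
          rw [e]
          simp
      _ = ∫ u in Ioo (0:ℝ) t, rBeta β α * (g u * (t - u) ^ (α + β - 1)) := by
          refine MeasureTheory.setIntegral_congr_fun measurableSet_Ioo fun u hu => ?_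
          have e : (fun s => H s u) = (Ioo u t).indicator (fun s => F (s, u)) :=
            funext fun s => hsec1' u hu s
          rw [e, MeasureTheory.integral_indicator measurableSet_Ioo,
            ← MeasureTheory.integral_Ioc_eq_integral_Ioo,
            ← intervalIntegral.integral_of_le hu.2.le]
          have e2 : (∫ s in u..t, F (s, u))
              = ∫ s in u..t, g u * ((s - u) ^ (β - 1) * (t - s) ^ (α - 1)) := rfl
          rw [e2, intervalIntegral.integral_const_mul, inner_integral hβ hα hu.2,
            show β + α - 1 = α + β - 1 by ring]
          ring
      _ = rBeta β α * ∫ u in Ioo (0:ℝ) t, g u * (t - u) ^ (α + β - 1) :=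
          MeasureTheory.integral_const_mul _ _
  rw [hL, hI2, hswap, hI3, rlInt]
  have hBeta : Real.Gamma β * Real.Gamma α = Real.Gamma (α + β) * rBeta β α := by
    rw [show α + β = β + α by ring]
    exact Gamma_mul_Gamma_eq_rBeta hβ hα
  have hB : rBeta β α = Real.Gamma β * Real.Gamma α / Real.Gamma (α + β) := by
    rw [eq_div_iff hΓs.ne']
    linear_combination -hBeta
  rw [hB]
  field_simp


/-- Semigroup property of the Riemann-Liouville fractional integral. -/
theorem rlInt_semigroup (α β b : ℝ) (hα : 0 < α) (hβ : 0 < β) (hb : 0 < b)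
    (f : ℝ → ℝ) (hf : ContinuousOn f (Set.Icc 0 b)) :
    ∀ t ∈ Set.Icc (0:ℝ) b, rlInt α (rlInt β f) t = rlInt (α + β) f t := by
  intro t htmem
  obtain ⟨ht0, htb⟩ := htmem
  set g : ℝ → ℝ := fun x => f (max 0 (min x b)) with hgdef
  have hmem : ∀ x : ℝ, max 0 (min x b) ∈ Icc (0:ℝ) b :=
    fun x => ⟨le_max_left _ _, max_le hb.le (min_le_right _ _)⟩
  have hg : Continuous g := hf.comp_continuous (by fun_prop) hmem
  obtain ⟨M, hMb⟩ := isCompact_Icc.exists_bound_of_continuousOn hf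
  have hM : ∀ x, |g x| ≤ M := fun x => hMb _ (hmem x)
  have hgf : ∀ x ∈ Icc (0:ℝ) b, g x = f x := by
    intro x hx
    simp only [hgdef]
    rw [min_eq_left hx.2, max_eq_right hx.1]
  have hrl : ∀ γ : ℝ, ∀ s ∈ Icc (0:ℝ) b, rlInt γ f s = rlInt γ g s := by
    intro γ s hs
    rw [rlInt, rlInt]
    congr 1
    refine intervalIntegral.integral_congr fun u hu => ?_
    rw [Set.uIcc_of_le hs.1] at hu
    rw [hgf u ⟨hu.1, le_trans hu.2 hs.2⟩]
  have h1 : rlInt α (rlInt β f) t = rlInt α (rlInt β g) t := by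
    rw [rlInt, rlInt]
    congr 1
    refine intervalIntegral.integral_congr fun s hs => ?_
    rw [Set.uIcc_of_le ht0] at hs
    rw [hrl β s ⟨hs.1, le_trans hs.2 htb⟩]
  rw [h1, hrl (α + β) t ⟨ht0, htb⟩]
  exact rl_semigroup_cont α β hα hβ g hg M hM ht0
end

section
/- For γ = -1/2 and δ = 1, the Wright function satisfies W(-z; -1/2, 1) = erfc(z/2) for all real z, where erfc is the complementary error function. -/
/-!
For `γ = -1/2, δ = 1` the Wright series `∑ (-z)^k / (k! Γ(1 - k/2))` loses all even terms
with `k ≥ 2`, because `1/Γ` vanishes at the poles `1 - k/2 ∈ {0, -1, …}`. The odd terms are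
computed from Euler's reflection formula `Γ(1/2 - m) Γ(m + 1/2) = (-1)^m π` and the closed form
of `Γ(m + 1/2)`; they turn out to be `-2/√π` times the terms of the Taylor series of
`∫₀^{z/2} e^{-t²} dt`, obtained by integrating the exponential series termwise. Finally
`erfc x = 1 - (2/√π) ∫₀^x e^{-t²} dt`, since the Gaussian integral over `(0, ∞)` is
`√π/2`.
-/

/-- The two-parameter Wright function with real parameters and argument
(with the convention `1/Γ = 0` at the poles, which is how `Real.Gamma`
vanishes at nonpositive integers). -/
noncomputable def wrightR (γ δ z : ℝ) : ℝ :=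
  ∑' k : ℕ, z ^ k / ((k.factorial : ℝ) * Real.Gamma (γ * k + δ))

/-- The complementary error function `erfc(x) = (2/√π) ∫_x^∞ e^{-t²} dt`. -/
noncomputable def erfc (x : ℝ) : ℝ :=
  (2 / Real.sqrt Real.pi) * ∫ t in Set.Ioi x, Real.exp (-t ^ 2)

open Real MeasureTheory Set intervalIntegral
open scoped Nat

theorem Real.Gamma_one_half_sub_nat_mul_Gamma_nat_add_half (m : ℕ) :
    Gamma (1 / 2 - m) * Gamma (m + 1 / 2) = (-1) ^ m * π := by
  have h := Gamma_mul_Gamma_one_sub (m + 1 / 2)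
  rw [show (1 : ℝ) - (m + 1 / 2) = 1 / 2 - m by ring, mul_add, mul_one_div, sin_add_pi_div_two,
    mul_comm π, cos_nat_mul_pi] at h
  rw [mul_comm, h]
  rcases neg_one_pow_eq_or ℝ m with h1 | h1 <;> simp [h1, div_neg]

theorem Real.factorial_mul_Gamma_one_half_sub_nat (m : ℕ) :
    ((2 * m + 1)! : ℝ) * Gamma (1 / 2 - m) = (-4) ^ m * (2 * m + 1) * m ! * √π := by
  have h := Gamma_one_half_sub_nat_mul_Gamma_nat_add_half m
  rw [Gamma_nat_add_half, mul_div_assoc', div_eq_iff (by positivity)] at h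
  have hπ : √π ^ 2 = π := sq_sqrt pi_pos.le
  refine mul_right_cancel₀ (sqrt_pos.2 pi_pos).ne' ?_
  rw [Nat.factorial_eq_mul_doubleFactorial, Nat.doubleFactorial_add_one,
    Nat.doubleFactorial_two_mul]
  push_cast
  rw [show (-4 : ℝ) ^ m = (-1) ^ m * 2 ^ m * 2 ^ m by rw [← mul_pow, ← mul_pow]; norm_num]
  linear_combination
    (2 * m + 1) * 2 ^ m * m ! * h - (2 * m + 1) * m ! * (-1) ^ m * 2 ^ m * 2 ^ m * hπ

theorem hasSum_integral_exp_neg_sq (x : ℝ) :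
    HasSum (fun m : ℕ ↦ (-1) ^ m * x ^ (2 * m + 1) / (m ! * (2 * m + 1)))
      (∫ t in 0..x, exp (-t ^ 2)) := by
  have hexp (s : ℝ) : HasSum (fun m : ℕ ↦ s ^ m / m !) (exp s) := by
    simpa [← exp_eq_exp_ℝ] using NormedSpace.expSeries_div_hasSum_exp s
  have hterm (m : ℕ) : ∫ t in 0..x, (-1) ^ m * t ^ (2 * m) / m ! =
      (-1) ^ m * x ^ (2 * m + 1) / (m ! * (2 * m + 1)) := by
    simp only [mul_div_assoc, intervalIntegral.integral_const_mul, intervalIntegral.integral_div,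
      integral_pow]
    push_cast
    field_simp
    simp
  simp_rw [← hterm]
  refine hasSum_integral_of_dominated_convergence (fun m t ↦ t ^ (2 * m) / m !)
    (fun m ↦ by fun_prop) (fun m ↦ ae_of_all _ fun t _ ↦ ?_)
    (ae_of_all _ fun t _ ↦ ?_) ?_ (ae_of_all _ fun t _ ↦ ?_)
  · simp [pow_mul]
  · simpa [pow_mul] using (hexp (t ^ 2)).summable
  · have hbound : (fun t : ℝ ↦ ∑' m : ℕ, t ^ (2 * m) / m !) = fun t ↦ exp (t ^ 2) := by
      ext t; simpa [pow_mul] using (hexp (t ^ 2)).tsum_eq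
    rw [hbound]
    exact (by fun_prop : Continuous fun t : ℝ ↦ exp (t ^ 2)).intervalIntegrable _ _
  · have hsign :
        (fun m : ℕ ↦ (-t ^ 2) ^ m / m !) = fun m ↦ (-1) ^ m * t ^ (2 * m) / m ! := by
      ext m; rw [neg_pow, pow_mul]
    exact hsign ▸ hexp (-t ^ 2)

theorem erfc_eq_one_sub_integral (x : ℝ) :
    erfc x = 1 - 2 / √π * ∫ t in 0..x, exp (-t ^ 2) := by
  have hint : Integrable (fun t : ℝ ↦ exp (-t ^ 2)) := by
    simpa using integrable_exp_neg_mul_sq one_pos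
  have hsplit := integral_interval_add_Ioi (a := 0) (b := x) hint.integrableOn hint.integrableOn
  have hhalf : ∫ t in Ioi (0 : ℝ), exp (-t ^ 2) = √π / 2 := by
    simpa using integral_gaussian_Ioi 1
  have hIoi : ∫ t in Ioi x, exp (-t ^ 2) = √π / 2 - ∫ t in 0..x, exp (-t ^ 2) := by
    linarith
  rw [erfc, hIoi]
  field_simp

noncomputable def wrightTerm (γ δ z : ℝ) (k : ℕ) : ℝ :=
  z ^ k / ((k ! : ℝ) * Gamma (γ * k + δ))

theorem wrightTerm_neg_half_one_zero (z : ℝ) : wrightTerm (-(1 / 2)) 1 z 0 = 1 := by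
  simp [wrightTerm]

theorem wrightTerm_neg_half_one_two_mul {j : ℕ} (hj : j ≠ 0) (z : ℝ) :
    wrightTerm (-(1 / 2)) 1 z (2 * j) = 0 := by
  obtain ⟨i, rfl⟩ := Nat.exists_eq_succ_of_ne_zero hj
  have hpole : -(1 / 2 : ℝ) * ↑(2 * (i + 1)) + 1 = -i := by push_cast; ring
  rw [wrightTerm, hpole, Gamma_neg_nat_eq_zero, mul_zero, div_zero]

theorem wrightTerm_neg_half_one_two_mul_add_one (z : ℝ) (m : ℕ) :
    wrightTerm (-(1 / 2)) 1 (-z) (2 * m + 1) =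
      -(2 / √π) * ((-1) ^ m * (z / 2) ^ (2 * m + 1) / (m ! * (2 * m + 1))) := by
  have harg : -(1 / 2 : ℝ) * ↑(2 * m + 1) + 1 = 1 / 2 - m := by push_cast; ring
  rw [wrightTerm, harg, factorial_mul_Gamma_one_half_sub_nat, Odd.neg_pow (odd_two_mul_add_one m),
    neg_pow (4 : ℝ), div_pow, pow_succ 2, pow_mul 2, show (2 : ℝ) ^ 2 = 4 by norm_num]
  field_simp
  rw [pow_right_comm (-1 : ℝ) m 2, neg_one_sq, one_pow, mul_one]

/-- `W(-z; -1/2, 1) = erfc(z/2)` for all real `z`. -/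
theorem wright_neg_half_one (z : ℝ) :
    wrightR (-(1/2)) 1 (-z) = erfc (z / 2) := by
  have heven : HasSum (fun j ↦ wrightTerm (-(1 / 2)) 1 (-z) (2 * j)) 1 := by
    convert hasSum_single 0 fun j hj ↦ wrightTerm_neg_half_one_two_mul hj (-z)
    exact (wrightTerm_neg_half_one_zero (-z)).symm
  have hodd := (hasSum_integral_exp_neg_sq (z / 2)).mul_left (-(2 / √π))
  simp_rw [← wrightTerm_neg_half_one_two_mul_add_one] at hodd
  calc wrightR (-(1 / 2)) 1 (-z) = ∑' k, wrightTerm (-(1 / 2)) 1 (-z) k := rfl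
    _ = 1 + -(2 / √π) * ∫ t in 0..z / 2, exp (-t ^ 2) := (heven.even_add_odd hodd).tsum_eq
    _ = erfc (z / 2) := by rw [erfc_eq_one_sub_integral]; ring
end
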